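/- Let K be a field of characteristic zero, V and W K-vector spaces, and B : V × V → W a symmetric bilinear map with associated linear map B̃ : V ⊗ V → W. Suppose V is the internal direct sum of finitely many subspaces V₁, …, V_m, that the family of subspaces B̃(image of V_i ⊗ V_j in V ⊗ V) of W, for 1 ≤ i ≤ j ≤ m, is linearly independent (their sum in W is direct), that for all i < j the restriction of B̃ to the image of V_i ⊗ V_j is injective, and that for each i the kernel of the restriction of B̃ to the image of V_i ⊗ V_i equals span{x⊗y − y⊗x : x, y ∈ V_i}. Then the kernel of B̃ equals span{x⊗y − y⊗x : x, y ∈ V}; equivalently, the induced map Sym²V → W on the symmetric square is injective. -/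

import Mathlib

/-!
Write `A` for the span of the antisymmetric tensors `x ⊗ y - y ⊗ x`, which `B̃` kills since `B`
is symmetric. As `x ⊗ y ≡ y ⊗ x` modulo `A`, the tensors `V_i ⊗ V_j` with `i ≤ j` already span
`V ⊗ V` modulo `A`. So a kernel element is `a + ∑ s_ij` with `a ∈ A`, `s_ij ∈ V_i ⊗ V_j`, and
`∑ B̃ s_ij = 0`; independence of the images forces `B̃ s_ij = 0` for each pair, and then
`s_ij = 0` for `i < j`, while `s_ii ∈ A` by the hypothesis on the diagonal blocks.
-/

open TensorProduct Submodule

section Kernel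

variable {R M N ι : Type*} [Ring R] [AddCommGroup M] [Module R M] [AddCommGroup N] [Module R N]

theorem LinearMap.ker_eq_of_iSupIndep_map {f : M →ₗ[R] N} {A : Submodule R M}
    {S : ι → Submodule R M} (hA : A ≤ LinearMap.ker f) (hspan : A ⊔ ⨆ i, S i = ⊤)
    (hindep : iSupIndep fun i => (S i).map f) (hS : ∀ i, S i ⊓ LinearMap.ker f ≤ A) :
    LinearMap.ker f = A := by
  refine le_antisymm (fun t ht => ?_) hA
  obtain ⟨a, haA, s, hs, rfl⟩ := mem_sup.mp (hspan ▸ mem_top : t ∈ A ⊔ ⨆ i, S i)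
  obtain ⟨v, hvS, rfl⟩ := (mem_iSup_iff_exists_finsupp _ _).mp hs
  have hfv : ∑ i ∈ v.support, f (v i) = 0 := by
    rw [← map_sum, ← LinearMap.mem_ker]
    simpa only [Finsupp.sum, LinearMap.mem_ker, map_add, LinearMap.mem_ker.mp (hA haA),
      zero_add] using ht
  have hv_ker : ∀ i ∈ v.support, f (v i) = 0 :=
    (iSupIndep_iff_finsetSum_eq_zero_imp_eq_zero _).mp hindep v.support (f ∘ v)
      (fun i _ => mem_map_of_mem (hvS i)) hfv
  exact add_mem haA <| sum_mem fun i hi => hS i ⟨hvS i, hv_ker i hi⟩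

end Kernel

section Tensor

variable {R M N : Type*} [CommRing R] [AddCommGroup M] [Module R M] [AddCommGroup N] [Module R N]

theorem Submodule.span_tmul_eq_map₂_mk (P : Submodule R M) (Q : Submodule R N) :
    span R {t : M ⊗[R] N | ∃ x ∈ P, ∃ y ∈ Q, t = x ⊗ₜ[R] y} =
      map₂ (TensorProduct.mk R M N) P Q := by
  rw [map₂_eq_span_image2]
  congr 1
  ext t
  simp [Set.image2, eq_comm]

variable (R M) in
def antisymmetricTensors : Submodule R (M ⊗[R] M) :=
  span R {t | ∃ x y : M, t = x ⊗ₜ[R] y - y ⊗ₜ[R] x}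

theorem antisymmetricTensors_le_ker_lift {B : M →ₗ[R] M →ₗ[R] N} (hB : ∀ x y, B x y = B y x) :
    antisymmetricTensors R M ≤ LinearMap.ker (lift B) := by
  rw [antisymmetricTensors, span_le]
  rintro _ ⟨x, y, rfl⟩
  simp [hB x y]

theorem map₂_mk_le_antisymmetricTensors_sup_swap (P Q : Submodule R M) :
    map₂ (TensorProduct.mk R M M) P Q ≤
      antisymmetricTensors R M ⊔ map₂ (TensorProduct.mk R M M) Q P := by
  rw [map₂_eq_span_image2, span_le]
  rintro _ ⟨x, hx, y, hy, rfl⟩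
  change x ⊗ₜ[R] y ∈ _
  rw [show x ⊗ₜ[R] y = (x ⊗ₜ y - y ⊗ₜ x) + y ⊗ₜ x by abel]
  exact add_mem (mem_sup_left (subset_span ⟨x, y, rfl⟩))
    (mem_sup_right (apply_mem_map₂ _ hy hx))

theorem antisymmetricTensors_sup_iSup_map₂_mk_eq_top {ι : Type*} [LinearOrder ι]
    (P : ι → Submodule R M) (hP : ⨆ i, P i = ⊤) :
    antisymmetricTensors R M ⊔
        ⨆ p : {p : ι × ι // p.1 ≤ p.2}, map₂ (TensorProduct.mk R M M) (P p.1.1) (P p.1.2) = ⊤ := by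
  set T := ⨆ p : {p : ι × ι // p.1 ≤ p.2}, map₂ (TensorProduct.mk R M M) (P p.1.1) (P p.1.2)
  have hT : ∀ i j, i ≤ j → map₂ (TensorProduct.mk R M M) (P i) (P j) ≤ T := fun i j h =>
    le_iSup_of_le (ι := {p : ι × ι // p.1 ≤ p.2}) ⟨(i, j), h⟩ le_rfl
  rw [eq_top_iff, ← map₂_mk_top_top_eq_top, ← hP, map₂_iSup_left]
  refine iSup_le fun i => ?_
  rw [map₂_iSup_right]
  refine iSup_le fun j => ?_
  rcases le_total i j with hij | hji
  · exact le_sup_of_le_right (hT i j hij)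
  · exact (map₂_mk_le_antisymmetricTensors_sup_swap _ _).trans (sup_le_sup_left (hT j i hji) _)

end Tensor

theorem stmt_9_general (K V W : Type*) [Field K]
    [AddCommGroup V] [Module K V] [AddCommGroup W] [Module K W]
    (m : ℕ) (Vsub : Fin m → Submodule K V)
    (B : V →ₗ[K] V →ₗ[K] W) (hsymm : ∀ x y : V, B x y = B y x)
    (hinternal : DirectSum.IsInternal Vsub)
    (hindep : iSupIndep (fun p : {p : Fin m × Fin m // p.1 ≤ p.2} =>
      Submodule.map (TensorProduct.lift B)
        (Submodule.span K
          {t : V ⊗[K] V | ∃ x ∈ Vsub p.1.1, ∃ y ∈ Vsub p.1.2, t = x ⊗ₜ[K] y})))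
    (hinj : ∀ i j : Fin m, i < j →
      (Submodule.span K {t : V ⊗[K] V | ∃ x ∈ Vsub i, ∃ y ∈ Vsub j, t = x ⊗ₜ[K] y}) ⊓
          LinearMap.ker (TensorProduct.lift B) = ⊥)
    (hker : ∀ i : Fin m,
      (Submodule.span K {t : V ⊗[K] V | ∃ x ∈ Vsub i, ∃ y ∈ Vsub i, t = x ⊗ₜ[K] y}) ⊓
          LinearMap.ker (TensorProduct.lift B)
        = Submodule.span K
            {t : V ⊗[K] V | ∃ x ∈ Vsub i, ∃ y ∈ Vsub i, t = x ⊗ₜ[K] y - y ⊗ₜ[K] x}) :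
    LinearMap.ker (TensorProduct.lift B)
      = Submodule.span K {t : V ⊗[K] V | ∃ x y : V, t = x ⊗ₜ[K] y - y ⊗ₜ[K] x} := by
  simp only [span_tmul_eq_map₂_mk] at hindep hinj hker
  refine LinearMap.ker_eq_of_iSupIndep_map (antisymmetricTensors_le_ker_lift hsymm)
    (antisymmetricTensors_sup_iSup_map₂_mk_eq_top Vsub hinternal.submodule_iSup_eq_top) hindep ?_
  rintro ⟨⟨i, j⟩, hij : i ≤ j⟩
  rcases hij.lt_or_eq with hlt | rfl
  · exact (hinj i j hlt).trans_le bot_le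
  · rw [hker i]
    exact span_mono fun _ ⟨x, _, y, _, ht⟩ => ⟨x, y, ht⟩

/-- Abstract linear-algebra content of Lemma 4.6 of the paper: let
`B : V × V → W` be a symmetric bilinear map with associated linear map
`B̃ : V ⊗ V → W`.  Suppose `V` is the internal direct sum of subspaces
`V₁, …, V_m`, the subspaces `B̃(V_i ⊗ V_j)` of `W` for `i ≤ j` are independent,
`B̃` is injective on the image of `V_i ⊗ V_j` for `i < j`, and for each `i` the
kernel of `B̃` on the image of `V_i ⊗ V_i` is spanned by the antisymmetric
tensors of elements of `V_i`.  Then `Ker B̃ = span{x⊗y − y⊗x : x, y ∈ V}`,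
i.e. the induced map `Sym²V → W` is injective. -/
theorem stmt_9 (K V W : Type*) [Field K] [CharZero K]
    [AddCommGroup V] [Module K V] [AddCommGroup W] [Module K W]
    (m : ℕ) (Vsub : Fin m → Submodule K V)
    (B : V →ₗ[K] V →ₗ[K] W) (hsymm : ∀ x y : V, B x y = B y x)
    (hinternal : DirectSum.IsInternal Vsub)
    (hindep : iSupIndep (fun p : {p : Fin m × Fin m // p.1 ≤ p.2} =>
      Submodule.map (TensorProduct.lift B)
        (Submodule.span K
          {t : V ⊗[K] V | ∃ x ∈ Vsub p.1.1, ∃ y ∈ Vsub p.1.2, t = x ⊗ₜ[K] y})))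
    (hinj : ∀ i j : Fin m, i < j →
      (Submodule.span K {t : V ⊗[K] V | ∃ x ∈ Vsub i, ∃ y ∈ Vsub j, t = x ⊗ₜ[K] y}) ⊓
          LinearMap.ker (TensorProduct.lift B) = ⊥)
    (hker : ∀ i : Fin m,
      (Submodule.span K {t : V ⊗[K] V | ∃ x ∈ Vsub i, ∃ y ∈ Vsub i, t = x ⊗ₜ[K] y}) ⊓
          LinearMap.ker (TensorProduct.lift B)
        = Submodule.span K
            {t : V ⊗[K] V | ∃ x ∈ Vsub i, ∃ y ∈ Vsub i, t = x ⊗ₜ[K] y - y ⊗ₜ[K] x}) :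
    LinearMap.ker (TensorProduct.lift B)
      = Submodule.span K {t : V ⊗[K] V | ∃ x y : V, t = x ⊗ₜ[K] y - y ⊗ₜ[K] x} :=
  stmt_9_general K V W m Vsub B hsymm hinternal hindep hinj hker
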